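/- Let m ≥ 2 and ν ≥ 2 be integers with 2^{ν-1} ≤ m < 2^ν. Then the sequence a_n = f_{m,n}(-1) satisfies Δ^{2^ν} a_n = a_n for all n ≥ 0, where Δ^r denotes the r-th forward difference operator. -/

import Mathlib

/-!
By Lucas' theorem, `C(j, m) mod 2` only depends on the lowest `ν` binary digits of `j` when
`m < 2 ^ ν`, so `b j = (-1) ^ C(j, m)` has period `2 ^ ν`. The sequence `a` is the binomial
transform of `b`, and forward differences act on a binomial transform by shifting the transformed
sequence; hence `Δ^(2 ^ ν) a` is the binomial transform of `j ↦ b (j + 2 ^ ν) = b j`, i.e. `a`.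
-/

open Finset fwdDiff

namespace Choose

variable {p : ℕ} [Fact p.Prime]

lemma choose_add_prime_pow_modEq {ν k : ℕ} (hk : k < p ^ ν) (n : ℕ) :
    (n + p ^ ν).choose k ≡ n.choose k [MOD p] := by
  -- Lucas' theorem cut off after digit `ν`: the factor for the higher digits is `C(_, 0) = 1`.
  have hlow : ∀ n : ℕ, n.choose k ≡
      ∏ i ∈ range ν, (n / p ^ i % p).choose (k / p ^ i % p) [ZMOD p] := fun n => by
    simpa [Nat.div_eq_of_lt hk] using
      choose_modEq_choose_mul_prod_range_choose (p := p) (n := n) (k := k) ν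
  have hdigits : ∀ i ∈ range ν, (n + p ^ ν) / p ^ i % p = n / p ^ i % p := by
    intro i hi
    obtain ⟨d, rfl⟩ := Nat.exists_eq_add_of_lt (mem_range.mp hi)
    have hp : 0 < p ^ i := pow_pos (Fact.out : p.Prime).pos i
    rw [show p ^ (i + d + 1) = p ^ i * (p * p ^ d) by ring, Nat.add_mul_div_left _ _ hp,
      Nat.add_mul_mod_self_left]
  rw [← Int.natCast_modEq_iff]
  refine (hlow _).trans ?_
  rw [prod_congr rfl fun i hi => by rw [hdigits i hi]]
  exact (hlow n).symm

end Choose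

lemma neg_one_pow_choose_periodic {m ν : ℕ} (hm : m < 2 ^ ν) :
    Function.Periodic (fun j : ℕ => (-1 : ℤ) ^ j.choose m) (2 ^ ν) := fun j => by
  dsimp only
  rw [neg_one_pow_eq_pow_mod_two, Choose.choose_add_prime_pow_modEq hm j,
    ← neg_one_pow_eq_pow_mod_two]

section ForwardDifferences

variable {G : Type*} [AddCommGroup G]

def binomialTransform (b : ℕ → G) (t : ℕ) : G :=
  ∑ j ∈ range (t + 1), t.choose j • b j

lemma fwdDiff_binomialTransform (b : ℕ → G) :
    Δ_[1] (binomialTransform b) = binomialTransform fun j => b (j + 1) := by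
  funext t
  simp only [fwdDiff, binomialTransform,
    sum_choose_succ_nsmul (fun i _ => b i) t, add_sub_cancel_left]

lemma fwdDiff_iter_binomialTransform (b : ℕ → G) (r : ℕ) :
    Δ_[1] ^[r] (binomialTransform b) = binomialTransform fun j => b (j + r) := by
  induction r generalizing b with
  | zero => rfl
  | succ r ih => rw [Function.iterate_succ_apply, fwdDiff_binomialTransform, ih]; rfl

lemma fwdDiff_iter_binomialTransform_of_periodic {b : ℕ → G} {r : ℕ}
    (hb : Function.Periodic b r) :
    Δ_[1] ^[r] (binomialTransform b) = binomialTransform b := by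
  rw [fwdDiff_iter_binomialTransform]
  exact congrArg binomialTransform (funext hb)

lemma fwdDiff_iter_eq_sum_shift_rev (f : ℕ → G) (r n : ℕ) :
    Δ_[1] ^[r] f n = ∑ k ∈ range (r + 1), ((-1 : ℤ) ^ k * r.choose k) • f (n + r - k) := by
  rw [fwdDiff_iter_eq_sum_shift, ← sum_range_reflect]
  refine sum_congr rfl fun k hk => ?_
  have hk : k ≤ r := Nat.lt_succ_iff.mp (mem_range.mp hk)
  rw [Nat.add_sub_cancel, Nat.sub_sub_self hk, Nat.choose_symm hk, smul_eq_mul, mul_one,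
    show n + r - k = n + (r - k) by omega]

end ForwardDifferences

theorem stmt_8_general (m ν : ℕ) (h2 : m < 2 ^ ν) (n : ℕ) :
    (∑ k ∈ Finset.range (2 ^ ν + 1), (-1 : ℤ) ^ k * ((2 ^ ν).choose k : ℤ) *
        (∑ j ∈ Finset.range (n + 2 ^ ν - k + 1),
          ((n + 2 ^ ν - k).choose j : ℤ) * (-1 : ℤ) ^ (j.choose m)))
      = ∑ j ∈ Finset.range (n + 1), (n.choose j : ℤ) * (-1 : ℤ) ^ (j.choose m) := by
  have h := congrFun (fwdDiff_iter_binomialTransform_of_periodic (neg_one_pow_choose_periodic h2)) n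
  rw [fwdDiff_iter_eq_sum_shift_rev] at h
  simpa only [binomialTransform, smul_eq_mul, nsmul_eq_mul] using h

theorem stmt_8 (m ν : ℕ) (hm : 2 ≤ m) (hν : 2 ≤ ν)
    (h1 : 2 ^ (ν - 1) ≤ m) (h2 : m < 2 ^ ν) (n : ℕ) :
    (∑ k ∈ Finset.range (2 ^ ν + 1), (-1 : ℤ) ^ k * ((2 ^ ν).choose k : ℤ) *
        (∑ j ∈ Finset.range (n + 2 ^ ν - k + 1),
          ((n + 2 ^ ν - k).choose j : ℤ) * (-1 : ℤ) ^ (j.choose m)))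
      = ∑ j ∈ Finset.range (n + 1), (n.choose j : ℤ) * (-1 : ℤ) ^ (j.choose m) :=
  stmt_8_general m ν h2 n
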